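/- Let n ≥ 3 and let g, j, the subalgebra 𝔫, and the ideal 𝔫_{n−1} be the normal j-algebra data of the n-dimensional Lie ball described in the context. If 𝔫' is a Lie subalgebra of 𝔫 with 𝔫' ∩ j(𝔫') = {0} which is not contained in 𝔫_{n−1}, then there exists a Lie subalgebra 𝔫̂' of 𝔫 containing 𝔫' with 𝔫̂' ∩ j(𝔫̂') = {0} and dim_ℝ 𝔫̂' = n. -/

import Mathlib

/-!
Write `W` for the span of the `ξ_k, ξ'_k` and `E` for the span of the `ξ_k`, so that
`𝔫 = W ⊕ ℝζ ⊕ ℝη` and `𝔫_{n-1} = W ⊕ ℝζ` is a Heisenberg algebra with centre `ℝζ`, `j` preserves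
`W`, and `⁅w, j w⁆` is a nonzero multiple of `ζ` for every nonzero `w ∈ W`.

Adjoining `ζ` keeps `𝔫'` totally real: if `y` and `j y` lie in `𝔫' + ℝζ` then both lie in `W`,
and `⁅y, j y⁆ ∈ ⁅𝔫', 𝔫'⁆` is a nonzero multiple of `ζ` unless `y = 0`. So we may assume
`ζ ∈ 𝔫'`. As `𝔫' ⊄ 𝔫_{n-1}`, it contains some `v ∈ η + 𝔫_{n-1}`, and `ad v ≡ ad η` modulo `ℝζ`
on `W`, so `U = 𝔫' ∩ W` is a totally real, `ad η`-stable subspace of `W` with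
`𝔫' = ℝv ⊕ ℝζ ⊕ U`. Adding vectors of `E` (which `ad η` kills) one at a time, each outside
`L + j L`, extends `U` to a totally real `ad η`-stable `L ⊆ W` of dimension `n - 2`. Then
`ℝv ⊕ ℝζ ⊕ L` is the required subalgebra: it is closed under brackets because
`⁅W, W⁆ ⊆ ℝζ`, and it is totally real because any `y` with `y, j y ∈ 𝔫` lies in `W`.
-/

open Submodule Module

section TotallyReal

variable {V : Type*} [AddCommGroup V] [Module ℝ V]

def IsTotallyReal (j : V →ₗ[ℝ] V) (L : Submodule ℝ V) : Prop :=
  L ⊓ L.map j = ⊥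

variable {j : V →ₗ[ℝ] V} {L : Submodule ℝ V}

theorem isTotallyReal_iff : IsTotallyReal j L ↔ ∀ y ∈ L, j y ∈ L → j y = 0 := by
  refine ⟨fun h y hy hjy => ?_, fun h => eq_bot_iff.2 ?_⟩
  · have : j y ∈ L ⊓ L.map j := ⟨hjy, y, hy, rfl⟩
    rwa [h, mem_bot] at this
  · rintro _ ⟨hx, y, hy, rfl⟩
    exact (mem_bot ℝ).2 (h y hy hx)

theorem IsTotallyReal.mono {L' : Submodule ℝ V} (h : IsTotallyReal j L) (hL' : L' ≤ L) :
    IsTotallyReal j L' :=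
  isTotallyReal_iff.2 fun y hy hjy => isTotallyReal_iff.1 h y (hL' hy) (hL' hjy)

theorem apply_mem_sup_map (hj : ∀ x, j (j x) = -x) {x : V} (hx : x ∈ L ⊔ L.map j) :
    j x ∈ L ⊔ L.map j := by
  obtain ⟨y, hy, _, ⟨z, hz, rfl⟩, rfl⟩ := mem_sup.1 hx
  rw [map_add, hj]
  exact add_mem (mem_sup_right (mem_map_of_mem hy)) (neg_mem (mem_sup_left hz))

theorem finrank_map_of_sq_eq_neg (hj : ∀ x, j (j x) = -x) (L : Submodule ℝ V) :
    finrank ℝ (L.map j) = finrank ℝ L := by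
  have hinj : Function.Injective j := fun x y hxy => by
    simpa [hj] using congrArg j hxy
  exact (equivMapOfInjective j hinj L).symm.finrank_eq

theorem IsTotallyReal.finrank_sup_map [FiniteDimensional ℝ V] (hj : ∀ x, j (j x) = -x)
    (hL : IsTotallyReal j L) : finrank ℝ ↥(L ⊔ L.map j) = 2 * finrank ℝ L := by
  have h := finrank_sup_add_finrank_inf_eq L (L.map j)
  rw [hL, finrank_bot, finrank_map_of_sq_eq_neg hj] at h
  omega

theorem IsTotallyReal.sup_span_singleton (hj : ∀ x, j (j x) = -x) (hL : IsTotallyReal j L)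
    {c : V} (hc : c ∉ L ⊔ L.map j) : IsTotallyReal j (L ⊔ ℝ ∙ c) := by
  rw [isTotallyReal_iff]
  intro y hy hjy
  obtain ⟨u, hu, _, ht, rfl⟩ := mem_sup.1 hy
  obtain ⟨t, rfl⟩ := mem_span_singleton.1 ht
  obtain ⟨u', hu', _, hs, hju⟩ := mem_sup.1 hjy
  obtain ⟨s, rfl⟩ := mem_span_singleton.1 hs
  set M := L ⊔ L.map j
  have h₁ : t • j c - s • c ∈ M := by
    have : t • j c - s • c = u' - j u := by
      rw [map_add, map_smul] at hju
      linear_combination (norm := module) -hju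
    rw [this]
    exact sub_mem (mem_sup_left hu') (mem_sup_right (mem_map_of_mem hu))
  have h₂ : -(t • c) - s • j c ∈ M := by
    have := apply_mem_sup_map hj h₁
    rwa [map_sub, map_smul, map_smul, hj, smul_neg] at this
  -- eliminating `j c` between `h₁` and `h₂` leaves `(s ^ 2 + t ^ 2) • c ∈ M`
  have hst : s ^ 2 + t ^ 2 = 0 := by
    by_contra hne
    refine hc ((smul_mem_iff M (neg_ne_zero.2 hne)).1 ?_)
    have : -(s ^ 2 + t ^ 2) • c = s • (t • j c - s • c) + t • (-(t • c) - s • j c) := by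
      module
    rw [this]
    exact add_mem (smul_mem M s h₁) (smul_mem M t h₂)
  obtain rfl : s = 0 := by nlinarith [sq_nonneg s, sq_nonneg t]
  obtain rfl : t = 0 := by nlinarith [sq_nonneg t]
  simp only [zero_smul, add_zero] at hju ⊢
  exact isTotallyReal_iff.1 hL u hu (hju ▸ hu')

variable [FiniteDimensional ℝ V] {W E : Submodule ℝ V}

theorem IsTotallyReal.two_mul_finrank_le (hj : ∀ x, j (j x) = -x) (hL : IsTotallyReal j L)
    (hLW : L ≤ W) (hjW : ∀ x ∈ W, j x ∈ W) : 2 * finrank ℝ L ≤ finrank ℝ W := by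
  rw [← hL.finrank_sup_map hj]
  exact finrank_mono (sup_le hLW (map_le_iff_le_comap.2 fun x hx => hjW x (hLW hx)))

theorem IsTotallyReal.exists_mem_notMem_sup_map (hj : ∀ x, j (j x) = -x)
    (hL : IsTotallyReal j L) (hWE : W ≤ E ⊔ E.map j) (hlt : 2 * finrank ℝ L < finrank ℝ W) :
    ∃ c ∈ E, c ∉ L ⊔ L.map j := by
  by_contra! hE
  have hEM : E ⊔ E.map j ≤ L ⊔ L.map j :=
    sup_le hE (map_le_iff_le_comap.2 fun x hx => apply_mem_sup_map hj (hE x hx))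
  have := finrank_mono (hWE.trans hEM)
  rw [hL.finrank_sup_map hj] at this
  omega

theorem IsTotallyReal.exists_finrank_eq {U : Submodule ℝ V} {k : ℕ} (hj : ∀ x, j (j x) = -x)
    (hU : IsTotallyReal j U) (hUW : U ≤ W) (hEW : E ≤ W) (hjW : ∀ x ∈ W, j x ∈ W)
    (hWE : W ≤ E ⊔ E.map j) (hW : finrank ℝ W = 2 * k) :
    ∃ L, U ≤ L ∧ L ≤ U ⊔ E ∧ IsTotallyReal j L ∧ finrank ℝ L = k := by
  induction hd : k - finrank ℝ U generalizing U with
  | zero =>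
    have hUk := hU.two_mul_finrank_le hj hUW hjW
    exact ⟨U, le_rfl, le_sup_left, hU, by omega⟩
  | succ d ih =>
    obtain ⟨c, hcE, hc⟩ := hU.exists_mem_notMem_sup_map hj hWE (by omega)
    have hcU : c ∉ U := fun h => hc (mem_sup_left h)
    obtain ⟨L, hUL, hLE, hL, hLk⟩ := ih (hU.sup_span_singleton hj hc)
      (sup_le hUW ((span_singleton_le_iff_mem c W).2 (hEW hcE)))
      (by rw [finrank_sup_span_singleton hcU]; omega)
    refine ⟨L, le_sup_left.trans hUL, hLE.trans ?_, hL, hLk⟩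
    exact sup_le (sup_le le_sup_left ((span_singleton_le_iff_mem c _).2 (mem_sup_right hcE)))
      le_sup_right

end TotallyReal

section SpanSingletonSup

variable {𝕜 V : Type*} [Field 𝕜] [AddCommGroup V] [Module 𝕜 V] {P S : Submodule 𝕜 V}

theorem exists_mem_sub_mem_of_le_sup_span_singleton {η : V} (hS : S ≤ P ⊔ 𝕜 ∙ η)
    (hSP : ¬ S ≤ P) : ∃ v ∈ S, v - η ∈ P := by
  obtain ⟨u, huS, huP⟩ := SetLike.not_le_iff_exists.1 hSP
  obtain ⟨p, hp, _, ha, rfl⟩ := mem_sup.1 (hS huS)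
  obtain ⟨a, rfl⟩ := mem_span_singleton.1 ha
  have ha0 : a ≠ 0 := by rintro rfl; simp_all
  refine ⟨a⁻¹ • (p + a • η), smul_mem S _ huS, ?_⟩
  rw [smul_add, smul_smul, inv_mul_cancel₀ ha0, one_smul, add_sub_cancel_right]
  exact smul_mem P _ hp

theorem mem_of_mem_span_singleton_sup {K : Submodule 𝕜 V} {c x : V} (hc : c ∉ P) (hK : K ≤ P)
    (hx : x ∈ 𝕜 ∙ c ⊔ K) (hxP : x ∈ P) : x ∈ K := by
  obtain ⟨_, ha, k, hk, rfl⟩ := mem_sup.1 hx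
  obtain ⟨a, rfl⟩ := mem_span_singleton.1 ha
  obtain rfl | ha0 := eq_or_ne a 0
  · simpa using hk
  · refine absurd ((smul_mem_iff P ha0).1 ?_) hc
    simpa using sub_mem hxP (hK hk)

theorem le_span_singleton_sup_sup {S W L : Submodule 𝕜 V} {v ζ η : V}
    (hS : S ≤ W ⊔ 𝕜 ∙ ζ ⊔ 𝕜 ∙ η) (hv : v ∈ S) (hvη : v - η ∈ W ⊔ 𝕜 ∙ ζ) (hζ : ζ ∈ S)
    (hSL : S ⊓ W ≤ L) : S ≤ 𝕜 ∙ v ⊔ (𝕜 ∙ ζ ⊔ L) := by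
  intro x hx
  obtain ⟨p, hp, _, ha, hpx⟩ := mem_sup.1 (hS hx)
  obtain ⟨a, rfl⟩ := mem_span_singleton.1 ha
  have hxv : x - a • v ∈ W ⊔ 𝕜 ∙ ζ := by
    have : x - a • v = p - a • (v - η) := by rw [← hpx]; module
    exact this ▸ sub_mem hp (smul_mem _ a hvη)
  obtain ⟨w, hw, _, hb, hwx⟩ := mem_sup.1 hxv
  obtain ⟨b, rfl⟩ := mem_span_singleton.1 hb
  have hwL : w ∈ L := by
    refine hSL ⟨?_, hw⟩
    have : w = x - a • v - b • ζ := by rw [← hwx]; abel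
    exact this ▸ sub_mem (sub_mem hx (smul_mem S a hv)) (smul_mem S b hζ)
  have : x = a • v + (b • ζ + w) := by rw [add_comm (b • ζ), hwx]; abel
  rw [this]
  exact add_mem (mem_sup_left (smul_mem _ a (mem_span_singleton_self v)))
    (mem_sup_right (add_mem (mem_sup_left (smul_mem _ b (mem_span_singleton_self ζ)))
      (mem_sup_right hwL)))

theorem finrank_span_singleton_sup_sup [FiniteDimensional 𝕜 V] {L : Submodule 𝕜 V} {v ζ : V}
    (hζ : ζ ∉ L) (hv : v ∉ 𝕜 ∙ ζ ⊔ L) : finrank 𝕜 ↥(𝕜 ∙ v ⊔ (𝕜 ∙ ζ ⊔ L)) = finrank 𝕜 L + 2 := by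
  rw [sup_comm, finrank_sup_span_singleton hv, sup_comm, finrank_sup_span_singleton hζ]

end SpanSingletonSup

theorem lie_mem_of_mem_span {R L : Type*} [CommRing R] [LieRing L] [LieAlgebra R L]
    {s t : Set L} {K : Submodule R L} (h : ∀ x ∈ s, ∀ y ∈ t, ⁅x, y⁆ ∈ K) {x y : L}
    (hx : x ∈ span R s) (hy : y ∈ span R t) : ⁅x, y⁆ ∈ K := by
  induction hx using span_induction with
  | mem x hx =>
    induction hy using span_induction with
    | mem y hy => exact h x hx y hy
    | zero => simp
    | add _ _ _ _ h₁ h₂ => rw [lie_add]; exact add_mem h₁ h₂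
    | smul a _ _ h₁ => rw [lie_smul]; exact smul_mem K a h₁
  | zero => simp
  | add _ _ _ _ h₁ h₂ => rw [add_lie]; exact add_mem h₁ h₂
  | smul a _ _ h₁ => rw [smul_lie]; exact smul_mem K a h₁

theorem lie_apply_ne_zero_of_mem_span {g ι : Type*} [LieRing g] [LieAlgebra ℝ g]
    [Fintype ι] {e : ι → g} {j : g →ₗ[ℝ] g} {ζ : g} (hζ : ζ ≠ 0)
    (hdiag : ∀ i, ⁅e i, j (e i)⁆ = ζ) (hoff : ∀ i k, i ≠ k → ⁅e i, j (e k)⁆ = 0) {x : g}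
    (hx : x ∈ span ℝ (Set.range e)) (hx0 : x ≠ 0) : ⁅x, j x⁆ ≠ 0 := by
  obtain ⟨c, rfl⟩ := (mem_span_range_iff_exists_fun ℝ).1 hx
  have hlie : ⁅∑ i, c i • e i, j (∑ i, c i • e i)⁆ = (∑ i, c i ^ 2) • ζ := by
    simp only [map_sum, map_smul, sum_lie, lie_sum, smul_lie, lie_smul, Finset.sum_smul]
    refine Finset.sum_congr rfl fun i _ => ?_
    rw [Finset.sum_eq_single i (fun k _ hki => by rw [hoff k i hki, smul_zero])
      (by simp), hdiag, smul_smul, sq]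
  obtain ⟨i, hi⟩ : ∃ i, c i ≠ 0 := by
    by_contra! h
    exact hx0 (by simp [h])
  rw [hlie]
  refine smul_ne_zero (ne_of_gt ?_) hζ
  exact Finset.sum_pos' (fun i _ => sq_nonneg (c i)) ⟨i, Finset.mem_univ i, by positivity⟩

def LieSubalgebra.supSpanSingleton {R L : Type*} [CommRing R] [LieRing L] [LieAlgebra R L]
    (H : LieSubalgebra R L) {x : L} (hx : x ∈ H.normalizer) : LieSubalgebra R L :=
  { (R ∙ x) ⊔ (H : Submodule R L) with
    lie_mem' := fun {_ _} => LieSubalgebra.lie_mem_sup_of_mem_normalizer hx }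

/-- The properties of `𝔫 = W ⊕ ℝζ ⊕ ℝη` and `𝔫_{n-1} = W ⊕ ℝζ` that the extension argument
uses. -/
structure IsLieBallNilradical {g : Type*} [LieRing g] [LieAlgebra ℝ g]
    (j : g →ₗ[ℝ] g) (W E : Submodule ℝ g) (ζ η : g) : Prop where
  apply_apply : ∀ x, j (j x) = -x
  apply_mem : ∀ x ∈ W, j x ∈ W
  le : E ≤ W
  le_sup_map : W ≤ E ⊔ E.map j
  center_notMem : ζ ∉ W
  notMem_sup : η ∉ W ⊔ ℝ ∙ ζ
  mem_of_apply_mem : ∀ x ∈ W ⊔ ℝ ∙ ζ ⊔ ℝ ∙ η, j x ∈ W ⊔ ℝ ∙ ζ ⊔ ℝ ∙ η → x ∈ W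
  lie_center_of_mem : ∀ x ∈ W, ⁅x, ζ⁆ = 0
  lie_center : ⁅η, ζ⁆ = 0
  lie_mem_span_center : ∀ x ∈ W, ∀ y ∈ W, ⁅x, y⁆ ∈ ℝ ∙ ζ
  lie_apply_ne_zero : ∀ x ∈ W, x ≠ 0 → ⁅x, j x⁆ ≠ 0
  lie_mem : ∀ x ∈ W, ⁅η, x⁆ ∈ W
  lie_eq_zero : ∀ x ∈ E, ⁅η, x⁆ = 0

namespace IsLieBallNilradical

variable {g : Type*} [LieRing g] [LieAlgebra ℝ g] {j : g →ₗ[ℝ] g} {W E : Submodule ℝ g}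
  {ζ η : g}

theorem lie_center_of_mem_sup (F : IsLieBallNilradical j W E ζ η)
    {x : g} (hx : x ∈ W ⊔ ℝ ∙ ζ ⊔ ℝ ∙ η) : ⁅x, ζ⁆ = 0 := by
  obtain ⟨_, hy, _, hc, rfl⟩ := mem_sup.1 hx
  obtain ⟨w, hw, _, hb, rfl⟩ := mem_sup.1 hy
  obtain ⟨b, rfl⟩ := mem_span_singleton.1 hb
  obtain ⟨c, rfl⟩ := mem_span_singleton.1 hc
  simp [F.lie_center_of_mem w hw, F.lie_center]

theorem lie_mem_span_center_of_mem_sup (F : IsLieBallNilradical j W E ζ η)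
    {x y : g} (hx : x ∈ W ⊔ ℝ ∙ ζ) (hy : y ∈ W ⊔ ℝ ∙ ζ) :
    ⁅x, y⁆ ∈ ℝ ∙ ζ := by
  obtain ⟨w, hw, _, ha, rfl⟩ := mem_sup.1 hx
  obtain ⟨w', hw', _, hb, rfl⟩ := mem_sup.1 hy
  obtain ⟨a, rfl⟩ := mem_span_singleton.1 ha
  obtain ⟨b, rfl⟩ := mem_span_singleton.1 hb
  rw [add_lie, lie_add, lie_add, smul_lie, smul_lie, lie_smul, lie_smul, lie_self,
    F.lie_center_of_mem w hw, ← lie_skew ζ w', F.lie_center_of_mem w' hw']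
  simpa using F.lie_mem_span_center w hw w' hw'

theorem center_mem_of_lie_apply_mem (F : IsLieBallNilradical j W E ζ η)
    {S : Submodule ℝ g} {y : g} (hyW : y ∈ W) (hy : y ≠ 0)
    (hS : ⁅y, j y⁆ ∈ S) : ζ ∈ S := by
  obtain ⟨c, hc⟩ := mem_span_singleton.1 (F.lie_mem_span_center y hyW (j y) (F.apply_mem y hyW))
  have hc0 : c ≠ 0 := by
    rintro rfl
    exact F.lie_apply_ne_zero y hyW hy (by rw [← hc, zero_smul])
  rw [← hc] at hS
  exact (smul_mem_iff S hc0).1 hS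

theorem isTotallyReal_span_center_sup (F : IsLieBallNilradical j W E ζ η)
    {𝔫' : LieSubalgebra ℝ g} (h'le : 𝔫'.toSubmodule ≤ W ⊔ ℝ ∙ ζ ⊔ ℝ ∙ η)
    (h'tr : IsTotallyReal j 𝔫'.toSubmodule) : IsTotallyReal j (ℝ ∙ ζ ⊔ 𝔫'.toSubmodule) := by
  have hle : ℝ ∙ ζ ⊔ 𝔫'.toSubmodule ≤ W ⊔ ℝ ∙ ζ ⊔ ℝ ∙ η :=
    sup_le (le_sup_right.trans le_sup_left) h'le
  rw [isTotallyReal_iff]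
  intro y hy hjy
  obtain rfl | hy0 := eq_or_ne y 0
  · exact map_zero j
  obtain ⟨_, hb, q', hq', rfl⟩ := mem_sup.1 hy
  obtain ⟨_, ha, q, hq, hjy'⟩ := mem_sup.1 hjy
  obtain ⟨b, rfl⟩ := mem_span_singleton.1 hb
  obtain ⟨a, rfl⟩ := mem_span_singleton.1 ha
  have hbr : ⁅b • ζ + q', j (b • ζ + q')⁆ = ⁅q', q⁆ := by
    rw [← hjy', add_lie, lie_add, lie_add, smul_lie, smul_lie, lie_smul, lie_smul, lie_self,
      ← lie_skew ζ q, F.lie_center_of_mem_sup (h'le hq), F.lie_center_of_mem_sup (h'le hq')]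
    simp
  have hζ : ζ ∈ 𝔫'.toSubmodule := F.center_mem_of_lie_apply_mem
    (F.mem_of_apply_mem _ (hle hy) (hle hjy)) hy0 (hbr ▸ 𝔫'.lie_mem hq' hq)
  rw [sup_eq_right.2 ((span_singleton_le_iff_mem _ _).2 hζ)] at hy hjy
  exact isTotallyReal_iff.1 h'tr _ hy hjy

theorem lie_mem_inf (F : IsLieBallNilradical j W E ζ η) {𝔫' : LieSubalgebra ℝ g} {v x : g}
    (hζ : ζ ∈ 𝔫') (hv : v ∈ 𝔫') (hvη : v - η ∈ W ⊔ ℝ ∙ ζ) (hx : x ∈ 𝔫'.toSubmodule ⊓ W) :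
    ⁅η, x⁆ ∈ 𝔫'.toSubmodule ⊓ W := by
  obtain ⟨c, hc⟩ := mem_span_singleton.1
    (F.lie_mem_span_center_of_mem_sup hvη (mem_sup_left hx.2))
  have : ⁅η, x⁆ = ⁅v, x⁆ - c • ζ := by rw [hc, sub_lie]; abel
  exact ⟨this ▸ sub_mem (𝔫'.lie_mem hv hx.1) (smul_mem _ c hζ), F.lie_mem x hx.2⟩

def centerSup (F : IsLieBallNilradical j W E ζ η) (L : Submodule ℝ g) (hL : L ≤ W) :
    LieSubalgebra ℝ g :=
  { ℝ ∙ ζ ⊔ L with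
    lie_mem' := fun hx hy =>
      have hle : ℝ ∙ ζ ⊔ L ≤ W ⊔ ℝ ∙ ζ := sup_le le_sup_right (hL.trans le_sup_left)
      mem_sup_left (F.lie_mem_span_center_of_mem_sup (hle hx) (hle hy)) }

theorem mem_normalizer_centerSup (F : IsLieBallNilradical j W E ζ η) {L : Submodule ℝ g}
    (hL : L ≤ W) (hLη : ∀ x ∈ L, ⁅η, x⁆ ∈ L) {v : g} (hvη : v - η ∈ W ⊔ ℝ ∙ ζ) :
    v ∈ (F.centerSup L hL).normalizer := by
  rw [LieSubalgebra.mem_normalizer_iff]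
  intro y hy
  obtain ⟨_, ha, l, hl, rfl⟩ := mem_sup.1 hy
  obtain ⟨a, rfl⟩ := mem_span_singleton.1 ha
  have hlie : ⁅v, a • ζ + l⁆ = ⁅v - η, a • ζ + l⁆ + ⁅η, l⁆ := by
    rw [sub_lie, lie_add η, lie_smul, F.lie_center, smul_zero, zero_add, sub_add_cancel]
  rw [hlie]
  refine add_mem (mem_sup_left (F.lie_mem_span_center_of_mem_sup hvη ?_)) (mem_sup_right (hLη l hl))
  exact add_mem (smul_mem _ a (mem_sup_right (mem_span_singleton_self ζ))) (mem_sup_left (hL hl))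

theorem isTotallyReal_span_singleton_sup_sup (F : IsLieBallNilradical j W E ζ η)
    {L : Submodule ℝ g} (hLW : L ≤ W) (hL : IsTotallyReal j L) {v : g}
    (hv : v ∈ W ⊔ ℝ ∙ ζ ⊔ ℝ ∙ η) (hvN : v ∉ W ⊔ ℝ ∙ ζ) :
    IsTotallyReal j (ℝ ∙ v ⊔ (ℝ ∙ ζ ⊔ L)) := by
  have hle : ℝ ∙ ζ ⊔ L ≤ W ⊔ ℝ ∙ ζ := sup_le le_sup_right (hLW.trans le_sup_left)
  have hmem : ∀ x ∈ ℝ ∙ v ⊔ (ℝ ∙ ζ ⊔ L), x ∈ W → x ∈ L := fun x hx hxW =>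
    mem_of_mem_span_singleton_sup F.center_notMem hLW
      (mem_of_mem_span_singleton_sup hvN hle hx (mem_sup_left hxW)) hxW
  have hN : ℝ ∙ v ⊔ (ℝ ∙ ζ ⊔ L) ≤ W ⊔ ℝ ∙ ζ ⊔ ℝ ∙ η :=
    sup_le ((span_singleton_le_iff_mem _ _).2 hv) (hle.trans le_sup_left)
  rw [isTotallyReal_iff]
  intro y hy hjy
  have hyW := F.mem_of_apply_mem y (hN hy) (hN hjy)
  exact isTotallyReal_iff.1 hL y (hmem y hy hyW) (hmem _ hjy (F.apply_mem y hyW))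

theorem exists_isTotallyReal_finrank_eq_of_center_mem (F : IsLieBallNilradical j W E ζ η)
    [FiniteDimensional ℝ g] {k : ℕ} (hk : finrank ℝ W = 2 * k) {𝔫' : LieSubalgebra ℝ g}
    (h'le : 𝔫'.toSubmodule ≤ W ⊔ ℝ ∙ ζ ⊔ ℝ ∙ η) (h'tr : IsTotallyReal j 𝔫'.toSubmodule)
    (h'not : ¬ 𝔫'.toSubmodule ≤ W ⊔ ℝ ∙ ζ) (hζ : ζ ∈ 𝔫') :
    ∃ m : LieSubalgebra ℝ g, 𝔫' ≤ m ∧ m.toSubmodule ≤ W ⊔ ℝ ∙ ζ ⊔ ℝ ∙ η ∧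
      IsTotallyReal j m.toSubmodule ∧ finrank ℝ m = k + 2 := by
  obtain ⟨v, hv, hvη⟩ := exists_mem_sub_mem_of_le_sup_span_singleton h'le h'not
  have hvN : v ∉ W ⊔ ℝ ∙ ζ := fun h => F.notMem_sup (by simpa using sub_mem h hvη)
  obtain ⟨L, hUL, hLE, hL, hLk⟩ := (h'tr.mono inf_le_left).exists_finrank_eq F.apply_apply
    inf_le_right F.le F.apply_mem F.le_sup_map hk
  have hLW : L ≤ W := hLE.trans (sup_le inf_le_right F.le)
  have hLη : ∀ x ∈ L, ⁅η, x⁆ ∈ L := fun x hx => by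
    obtain ⟨u, hu, e, he, rfl⟩ := mem_sup.1 (hLE hx)
    rw [lie_add, F.lie_eq_zero e he, add_zero]
    exact hUL (F.lie_mem_inf hζ hv hvη hu)
  have hζL : ζ ∉ L := fun h => F.center_notMem (hLW h)
  have hvL : v ∉ ℝ ∙ ζ ⊔ L := fun h => hvN (sup_le le_sup_right (hLW.trans le_sup_left) h)
  refine ⟨(F.centerSup L hLW).supSpanSingleton (F.mem_normalizer_centerSup hLW hLη hvη),
    le_span_singleton_sup_sup h'le hv hvη hζ hUL, sup_le ?_ ?_,
    F.isTotallyReal_span_singleton_sup_sup hLW hL (h'le hv) hvN, ?_⟩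
  · exact (span_singleton_le_iff_mem _ _).2 (h'le hv)
  · exact sup_le (le_sup_right.trans le_sup_left) (hLW.trans (le_sup_left.trans le_sup_left))
  · rw [← hLk]
    exact finrank_span_singleton_sup_sup hζL hvL

theorem exists_isTotallyReal_finrank_eq (F : IsLieBallNilradical j W E ζ η)
    [FiniteDimensional ℝ g] {k : ℕ} (hk : finrank ℝ W = 2 * k) {𝔫' : LieSubalgebra ℝ g}
    (h'le : 𝔫'.toSubmodule ≤ W ⊔ ℝ ∙ ζ ⊔ ℝ ∙ η) (h'tr : IsTotallyReal j 𝔫'.toSubmodule)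
    (h'not : ¬ 𝔫'.toSubmodule ≤ W ⊔ ℝ ∙ ζ) :
    ∃ m : LieSubalgebra ℝ g, 𝔫' ≤ m ∧ m.toSubmodule ≤ W ⊔ ℝ ∙ ζ ⊔ ℝ ∙ η ∧
      IsTotallyReal j m.toSubmodule ∧ finrank ℝ m = k + 2 := by
  have hζ : ζ ∈ 𝔫'.normalizer := (𝔫'.mem_normalizer_iff ζ).2 fun y hy => by
    rw [← lie_skew, F.lie_center_of_mem_sup (h'le hy), neg_zero]
    exact zero_mem _
  obtain ⟨m, hm, hmN, hmtr, hmk⟩ := F.exists_isTotallyReal_finrank_eq_of_center_mem hk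
    (𝔫' := 𝔫'.supSpanSingleton hζ)
    (sup_le (le_sup_right.trans le_sup_left) h'le) (F.isTotallyReal_span_center_sup h'le h'tr)
    (fun h => h'not (le_sup_right.trans h)) (mem_sup_left (mem_span_singleton_self ζ))
  exact ⟨m, le_trans (fun x hx => mem_sup_right hx) hm, hmN, hmtr, hmk⟩

end IsLieBallNilradical

namespace LieBall

variable {g ι : Type*} [LieRing g] [LieAlgebra ℝ g] {ξ ξ' : ι → g} {ζ η : g} {j : g →ₗ[ℝ] g}

theorem apply_mem (hj1 : ∀ k, j (ξ k) = ξ' k) (hj2 : ∀ k, j (ξ' k) = -ξ k) {x : g}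
    (hx : x ∈ span ℝ (Set.range ξ ∪ Set.range ξ')) :
    j x ∈ span ℝ (Set.range ξ ∪ Set.range ξ') := by
  refine (span_le (p := (span ℝ (Set.range ξ ∪ Set.range ξ')).comap j)).2 ?_ hx
  rintro _ (⟨k, rfl⟩ | ⟨k, rfl⟩)
  · rw [SetLike.mem_coe, mem_comap, hj1]; exact subset_span (Or.inr ⟨k, rfl⟩)
  · rw [SetLike.mem_coe, mem_comap, hj2]; exact neg_mem (subset_span (Or.inl ⟨k, rfl⟩))

theorem span_le_sup_map (hj1 : ∀ k, j (ξ k) = ξ' k) :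
    span ℝ (Set.range ξ ∪ Set.range ξ') ≤ span ℝ (Set.range ξ) ⊔ (span ℝ (Set.range ξ)).map j := by
  rw [span_le]
  rintro _ (⟨k, rfl⟩ | ⟨k, rfl⟩)
  · exact mem_sup_left (subset_span ⟨k, rfl⟩)
  · exact mem_sup_right ⟨ξ k, subset_span ⟨k, rfl⟩, hj1 k⟩

theorem lie_center (hz6 : ∀ k, ⁅ζ, ξ k⁆ = 0) (hz7 : ∀ k, ⁅ζ, ξ' k⁆ = 0) {x : g}
    (hx : x ∈ span ℝ (Set.range ξ ∪ Set.range ξ')) : ⁅x, ζ⁆ = 0 := by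
  rw [← mem_bot ℝ]
  refine lie_mem_of_mem_span ?_ hx (mem_span_singleton_self ζ)
  rintro _ (⟨k, rfl⟩ | ⟨k, rfl⟩) _ rfl <;> rw [← lie_skew, neg_mem_iff]
  exacts [(hz6 k).symm ▸ zero_mem _, (hz7 k).symm ▸ zero_mem _]

theorem lie_mem_span_center (hb1 : ∀ k, ⁅ξ k, ξ' k⁆ = ζ) (hz8 : ∀ k l, ⁅ξ k, ξ l⁆ = 0)
    (hz9 : ∀ k l, ⁅ξ' k, ξ' l⁆ = 0) (hz10 : ∀ k l, k ≠ l → ⁅ξ k, ξ' l⁆ = 0) {x y : g}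
    (hx : x ∈ span ℝ (Set.range ξ ∪ Set.range ξ')) (hy : y ∈ span ℝ (Set.range ξ ∪ Set.range ξ')) :
    ⁅x, y⁆ ∈ ℝ ∙ ζ := by
  have hbr : ∀ k l, ⁅ξ k, ξ' l⁆ ∈ ℝ ∙ ζ := fun k l => by
    obtain rfl | hkl := eq_or_ne k l
    · rw [hb1]; exact mem_span_singleton_self ζ
    · exact hz10 k l hkl ▸ zero_mem _
  refine lie_mem_of_mem_span ?_ hx hy
  rintro _ (⟨k, rfl⟩ | ⟨k, rfl⟩) _ (⟨l, rfl⟩ | ⟨l, rfl⟩)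
  · exact hz8 k l ▸ zero_mem _
  · exact hbr k l
  · rw [← lie_skew]; exact neg_mem (hbr l k)
  · exact hz9 k l ▸ zero_mem _

theorem lie_mem (hb2 : ∀ k, ⁅η, ξ' k⁆ = (2 : ℝ) • ξ k) (hz4 : ∀ k, ⁅η, ξ k⁆ = 0) {x : g}
    (hx : x ∈ span ℝ (Set.range ξ ∪ Set.range ξ')) :
    ⁅η, x⁆ ∈ span ℝ (Set.range ξ ∪ Set.range ξ') := by
  refine lie_mem_of_mem_span ?_ (mem_span_singleton_self η) hx
  rintro _ rfl _ (⟨k, rfl⟩ | ⟨k, rfl⟩)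
  · exact hz4 k ▸ zero_mem _
  · exact hb2 k ▸ smul_mem _ 2 (subset_span (Or.inl ⟨k, rfl⟩))

theorem lie_eq_zero (hz4 : ∀ k, ⁅η, ξ k⁆ = 0) {x : g} (hx : x ∈ span ℝ (Set.range ξ)) :
    ⁅η, x⁆ = 0 := by
  rw [← mem_bot ℝ]
  refine lie_mem_of_mem_span ?_ (mem_span_singleton_self η) hx
  rintro _ rfl _ ⟨k, rfl⟩
  exact hz4 k ▸ zero_mem _

theorem lie_apply_ne_zero [Fintype ι] (hb1 : ∀ k, ⁅ξ k, ξ' k⁆ = ζ)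
    (hz8 : ∀ k l, ⁅ξ k, ξ l⁆ = 0) (hz9 : ∀ k l, ⁅ξ' k, ξ' l⁆ = 0)
    (hz10 : ∀ k l, k ≠ l → ⁅ξ k, ξ' l⁆ = 0) (hj1 : ∀ k, j (ξ k) = ξ' k)
    (hj2 : ∀ k, j (ξ' k) = -ξ k) (hζ : ζ ≠ 0) {x : g}
    (hx : x ∈ span ℝ (Set.range ξ ∪ Set.range ξ')) (hx0 : x ≠ 0) : ⁅x, j x⁆ ≠ 0 := by
  rw [← Set.Sum.elim_range] at hx
  refine lie_apply_ne_zero_of_mem_span hζ ?_ ?_ hx hx0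
  · rintro (k | k)
    · simp [hj1, hb1]
    · rw [Sum.elim_inr, hj2, lie_neg, lie_skew, hb1]
  · rintro (k | k) (l | l) hkl
    · simpa [hj1] using hz10 k l (by simpa using hkl)
    · simp [hj2, hz8]
    · simp [hj1, hz9]
    · rw [Sum.elim_inr, Sum.elim_inr, hj2, lie_neg, lie_skew,
        hz10 l k (by simpa [eq_comm] using hkl)]

section Basis

variable {δ α : g} {W : Submodule ℝ g}

theorem eq_zero_of_smul_add_mem (h4 : LinearIndependent ℝ ![δ, α, η, ζ])
    (hdisj : Disjoint (span ℝ (Set.range ![δ, α, η, ζ])) W) {a b c d : ℝ}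
    (h : a • δ + b • α + c • η + d • ζ ∈ W) : a = 0 ∧ b = 0 ∧ c = 0 ∧ d = 0 := by
  have hsum : ∑ i, ![a, b, c, d] i • ![δ, α, η, ζ] i = a • δ + b • α + c • η + d • ζ := by
    simp [Fin.sum_univ_four]
  have h0 := disjoint_def.1 hdisj _ ((mem_span_range_iff_exists_fun ℝ).2 ⟨_, hsum⟩) h
  have hcoeff := Fintype.linearIndependent_iff.1 h4 _ (hsum.trans h0)
  exact ⟨hcoeff 0, hcoeff 1, hcoeff 2, hcoeff 3⟩

theorem center_notMem (h4 : LinearIndependent ℝ ![δ, α, η, ζ])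
    (hdisj : Disjoint (span ℝ (Set.range ![δ, α, η, ζ])) W) : ζ ∉ W := fun h =>
  one_ne_zero (eq_zero_of_smul_add_mem (a := 0) (b := 0) (c := 0) (d := 1) h4 hdisj
    (by simpa using h)).2.2.2

theorem notMem_sup (h4 : LinearIndependent ℝ ![δ, α, η, ζ])
    (hdisj : Disjoint (span ℝ (Set.range ![δ, α, η, ζ])) W) : η ∉ W ⊔ ℝ ∙ ζ := fun h => by
  obtain ⟨w, hw, _, hd, hwη⟩ := mem_sup.1 h
  obtain ⟨d, rfl⟩ := mem_span_singleton.1 hd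
  refine one_ne_zero
    (eq_zero_of_smul_add_mem (a := 0) (b := 0) (c := 1) (d := -d) h4 hdisj ?_).2.2.1
  convert hw using 1
  rw [← hwη]
  module

theorem mem_of_apply_mem (h4 : LinearIndependent ℝ ![δ, α, η, ζ])
    (hdisj : Disjoint (span ℝ (Set.range ![δ, α, η, ζ])) W) (hjW : ∀ x ∈ W, j x ∈ W)
    (hj3 : j ζ = α + δ) (hj4 : j η = δ - α) {x : g} (hx : x ∈ W ⊔ ℝ ∙ ζ ⊔ ℝ ∙ η)
    (hjx : j x ∈ W ⊔ ℝ ∙ ζ ⊔ ℝ ∙ η) : x ∈ W := by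
  obtain ⟨_, hy, _, hb, rfl⟩ := mem_sup.1 hx
  obtain ⟨w, hw, _, ha, rfl⟩ := mem_sup.1 hy
  obtain ⟨a, rfl⟩ := mem_span_singleton.1 ha
  obtain ⟨b, rfl⟩ := mem_span_singleton.1 hb
  obtain ⟨_, hy', _, hb', hjx'⟩ := mem_sup.1 hjx
  obtain ⟨w', hw', _, ha', rfl⟩ := mem_sup.1 hy'
  obtain ⟨a', rfl⟩ := mem_span_singleton.1 ha'
  obtain ⟨b', rfl⟩ := mem_span_singleton.1 hb'
  have hmem : (a + b) • δ + (a - b) • α + (-b') • η + (-a') • ζ ∈ W := by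
    convert sub_mem hw' (hjW w hw) using 1
    rw [map_add, map_add, map_smul, map_smul, hj3, hj4] at hjx'
    linear_combination (norm := module) -hjx'
  obtain ⟨hab, hab', -, -⟩ := eq_zero_of_smul_add_mem h4 hdisj hmem
  obtain rfl : a = 0 := by linarith
  obtain rfl : b = 0 := by linarith
  simpa using hw

theorem apply_apply
    (hspan : span ℝ (Set.range (Sum.elim ![δ, α, η, ζ] (Sum.elim ξ ξ'))) = ⊤)
    (hj1 : ∀ k, j (ξ k) = ξ' k) (hj2 : ∀ k, j (ξ' k) = -ξ k) (hj3 : j ζ = α + δ)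
    (hj4 : j η = δ - α) (hj5 : j δ = -((1 / 2 : ℝ) • (ζ + η)))
    (hj6 : j α = (1 / 2 : ℝ) • (η - ζ)) (x : g) : j (j x) = -x := by
  have : j ∘ₗ j = -LinearMap.id := by
    refine LinearMap.ext_on_range hspan ?_
    rintro (i | k | k)
    · fin_cases i <;> simp [hj3, hj4, hj5, hj6] <;> module
    · simp [hj1, hj2]
    · simp [hj1, hj2]
  simpa using LinearMap.congr_fun this x

end Basis

end LieBall

theorem statement3_general (n : ℕ) (hn : 3 ≤ n) (g : Type*) [LieRing g] [LieAlgebra ℝ g]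
    (δ α η ζ : g) (ξ ξ' : Fin (n - 2) → g)
    (hindep : LinearIndependent ℝ (Sum.elim ![δ, α, η, ζ] (Sum.elim ξ ξ')))
    (hspan : Submodule.span ℝ (Set.range (Sum.elim ![δ, α, η, ζ] (Sum.elim ξ ξ'))) = ⊤)
    (hb1 : ∀ k, ⁅ξ k, ξ' k⁆ = ζ)
    (hb2 : ∀ k, ⁅η, ξ' k⁆ = (2 : ℝ) • ξ k)
    (hz4 : ∀ k, ⁅η, ξ k⁆ = (0 : g))
    (hz5 : ⁅η, ζ⁆ = (0 : g))
    (hz6 : ∀ k, ⁅ζ, ξ k⁆ = (0 : g))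
    (hz7 : ∀ k, ⁅ζ, ξ' k⁆ = (0 : g))
    (hz8 : ∀ k l, ⁅ξ k, ξ l⁆ = (0 : g))
    (hz9 : ∀ k l, ⁅ξ' k, ξ' l⁆ = (0 : g))
    (hz10 : ∀ k l, k ≠ l → ⁅ξ k, ξ' l⁆ = (0 : g))
    (j : g →ₗ[ℝ] g)
    (hj1 : ∀ k, j (ξ k) = ξ' k) (hj2 : ∀ k, j (ξ' k) = -ξ k)
    (hj3 : j ζ = α + δ) (hj4 : j η = δ - α)
    (hj5 : j δ = -((1 / 2 : ℝ) • (ζ + η))) (hj6 : j α = (1 / 2 : ℝ) • (η - ζ))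
    (𝔫 : LieSubalgebra ℝ g)
    (h𝔫 : 𝔫.toSubmodule =
      Submodule.span ℝ (Set.range ξ ∪ Set.range ξ' ∪ {ζ, η}))
    (𝔫' : LieSubalgebra ℝ g) (h'le : 𝔫' ≤ 𝔫)
    (h'tr : 𝔫'.toSubmodule ⊓ (𝔫'.toSubmodule.map j) = ⊥)
    (h'not : ¬ (𝔫'.toSubmodule ≤
      Submodule.span ℝ (Set.range ξ ∪ Set.range ξ' ∪ {ζ}))) :
    ∃ m : LieSubalgebra ℝ g, 𝔫' ≤ m ∧ m ≤ 𝔫 ∧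
      m.toSubmodule ⊓ (m.toSubmodule.map j) = ⊥ ∧ Module.finrank ℝ m = n := by
  obtain ⟨h4, hξξ', hdisj⟩ := linearIndependent_sum.1 hindep
  simp only [Sum.elim_comp_inl, Sum.elim_comp_inr, Set.Sum.elim_range] at h4 hξξ' hdisj
  have : FiniteDimensional ℝ g := Module.Finite.of_basis (Basis.mk hindep hspan.ge)
  set W := span ℝ (Set.range ξ ∪ Set.range ξ')
  have hζ : ζ ≠ 0 := fun h => LieBall.center_notMem h4 hdisj (h ▸ zero_mem W)
  have F : IsLieBallNilradical j W (span ℝ (Set.range ξ)) ζ η :=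
    { apply_apply := LieBall.apply_apply hspan hj1 hj2 hj3 hj4 hj5 hj6
      apply_mem := fun _ => LieBall.apply_mem hj1 hj2
      le := span_mono Set.subset_union_left
      le_sup_map := LieBall.span_le_sup_map hj1
      center_notMem := LieBall.center_notMem h4 hdisj
      notMem_sup := LieBall.notMem_sup h4 hdisj
      mem_of_apply_mem := fun _ =>
        LieBall.mem_of_apply_mem h4 hdisj (fun _ => LieBall.apply_mem hj1 hj2) hj3 hj4
      lie_center_of_mem := fun _ => LieBall.lie_center hz6 hz7
      lie_center := hz5
      lie_mem_span_center := fun _ hx _ => LieBall.lie_mem_span_center hb1 hz8 hz9 hz10 hx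
      lie_apply_ne_zero := fun _ => LieBall.lie_apply_ne_zero hb1 hz8 hz9 hz10 hj1 hj2 hζ
      lie_mem := fun _ => LieBall.lie_mem hb2 hz4
      lie_eq_zero := fun _ => LieBall.lie_eq_zero hz4 }
  have hN : 𝔫.toSubmodule = W ⊔ ℝ ∙ ζ ⊔ ℝ ∙ η := by
    rw [h𝔫, span_union, span_insert, sup_assoc]
  have hW : finrank ℝ W = 2 * (n - 2) := by
    have := finrank_span_eq_card hξξ'
    rw [Set.Sum.elim_range] at this
    exact this.trans (by simp [two_mul])
  obtain ⟨m, hm, hmN, hmtr, hmk⟩ := F.exists_isTotallyReal_finrank_eq hW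
    (hN ▸ (LieSubalgebra.toSubmodule_le_toSubmodule _ _).2 h'le) h'tr
    (by rwa [span_union] at h'not)
  exact ⟨m, hm, (LieSubalgebra.toSubmodule_le_toSubmodule _ _).1 (hN ▸ hmN), hmtr, by omega⟩

/-- Let `g` (with linear map `j`, nilradical `𝔫`, and ideal `𝔫_{n-1}`) be
the normal `j`-algebra of the `n`-dimensional Lie ball (`n ≥ 3`), with basis
`δ, α, η, ζ, ξ_1, …, ξ_{n-2}, ξ'_1, …, ξ'_{n-2}` and brackets/complex structure as in the
paper; `𝔫` is spanned by the `ξ_k, ξ'_k, ζ, η` and `𝔫_{n-1}` by the `ξ_k, ξ'_k, ζ`.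
If `𝔫'` is a totally real Lie subalgebra of `𝔫` not contained in `𝔫_{n-1}`, then there is
a maximal totally real Lie subalgebra `𝔫̂'` of `𝔫` (totally real, of real dimension `n`)
containing `𝔫'`. -/
theorem statement3 (n : ℕ) (hn : 3 ≤ n) (g : Type*) [LieRing g] [LieAlgebra ℝ g]
    (δ α η ζ : g) (ξ ξ' : Fin (n - 2) → g)
    (hindep : LinearIndependent ℝ (Sum.elim ![δ, α, η, ζ] (Sum.elim ξ ξ')))
    (hspan : Submodule.span ℝ (Set.range (Sum.elim ![δ, α, η, ζ] (Sum.elim ξ ξ'))) = ⊤)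
    (hb1 : ∀ k, ⁅ξ k, ξ' k⁆ = ζ)
    (hb2 : ∀ k, ⁅η, ξ' k⁆ = (2 : ℝ) • ξ k)
    (hb3 : ∀ k, ⁅δ, ξ k⁆ = -ξ k)
    (hb4 : ⁅δ, ζ⁆ = -ζ)
    (hb5 : ⁅δ, η⁆ = -η)
    (hb6 : ∀ k, ⁅α, ξ' k⁆ = -ξ' k)
    (hb7 : ⁅α, ζ⁆ = -ζ)
    (hb8 : ⁅α, η⁆ = η)
    (hz1 : ⁅δ, α⁆ = (0 : g))
    (hz2 : ∀ k, ⁅δ, ξ' k⁆ = (0 : g))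
    (hz3 : ∀ k, ⁅α, ξ k⁆ = (0 : g))
    (hz4 : ∀ k, ⁅η, ξ k⁆ = (0 : g))
    (hz5 : ⁅η, ζ⁆ = (0 : g))
    (hz6 : ∀ k, ⁅ζ, ξ k⁆ = (0 : g))
    (hz7 : ∀ k, ⁅ζ, ξ' k⁆ = (0 : g))
    (hz8 : ∀ k l, ⁅ξ k, ξ l⁆ = (0 : g))
    (hz9 : ∀ k l, ⁅ξ' k, ξ' l⁆ = (0 : g))
    (hz10 : ∀ k l, k ≠ l → ⁅ξ k, ξ' l⁆ = (0 : g))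
    (j : g →ₗ[ℝ] g)
    (hj1 : ∀ k, j (ξ k) = ξ' k) (hj2 : ∀ k, j (ξ' k) = -ξ k)
    (hj3 : j ζ = α + δ) (hj4 : j η = δ - α)
    (hj5 : j δ = -((1 / 2 : ℝ) • (ζ + η))) (hj6 : j α = (1 / 2 : ℝ) • (η - ζ))
    (𝔫 : LieSubalgebra ℝ g)
    (h𝔫 : 𝔫.toSubmodule =
      Submodule.span ℝ (Set.range ξ ∪ Set.range ξ' ∪ {ζ, η}))
    (𝔫' : LieSubalgebra ℝ g) (h'le : 𝔫' ≤ 𝔫)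
    (h'tr : 𝔫'.toSubmodule ⊓ (𝔫'.toSubmodule.map j) = ⊥)
    (h'not : ¬ (𝔫'.toSubmodule ≤
      Submodule.span ℝ (Set.range ξ ∪ Set.range ξ' ∪ {ζ}))) :
    ∃ m : LieSubalgebra ℝ g, 𝔫' ≤ m ∧ m ≤ 𝔫 ∧
      m.toSubmodule ⊓ (m.toSubmodule.map j) = ⊥ ∧ Module.finrank ℝ m = n :=
  statement3_general n hn g δ α η ζ ξ ξ' hindep hspan hb1 hb2 hz4 hz5 hz6 hz7 hz8 hz9 hz10 j hj1 hj2
    hj3 hj4 hj5 hj6 𝔫 h𝔫 𝔫' h'le h'tr h'not
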